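/- Let p be a prime, s ≥ 1, and let k be a field of characteristic different from p containing a primitive p^s-th root of unity ζ. Let a_1, …, a_d be integers with a_1 = 1, and let σ be the k-algebra automorphism of k[x_1^{±1},…,x_d^{±1}] determined by σ(x_i) = ζ^{a_i} x_i. Then k[x_1^{±1},…,x_d^{±1}] is a free module of rank p^s over its invariant subalgebra k[x_1^{±1},…,x_d^{±1}]^{⟨σ⟩}, with basis 1, x_1, x_1^2, …, x_1^{p^s−1}. -/

import Mathlib

open AlgebraicGeometry CategoryTheory TopologicalSpace

noncomputable section

/-- The class of linear schemes over a field `k`: the smallest class of (separated, finite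
type) `k`-schemes containing the affine spaces `𝔸ⁿ_k`, closed under passing from a scheme `X`
with a closed subscheme `Z` (both in the class) to the open complement `X - Z`, closed under
passing from `X - Z` and `Z` (both in the class) to `X`, and closed under isomorphism. -/
inductive IsLinearScheme (k : Type) [Field k] : Scheme.{0} → Prop
  | affineSpace (n : ℕ) :
      IsLinearScheme k (Spec (CommRingCat.of (MvPolynomial (Fin n) k)))
  | of_iso {X Y : Scheme.{0}} (e : X ≅ Y) : IsLinearScheme k X → IsLinearScheme k Y
  | openCompl {Z X : Scheme.{0}} (f : Z ⟶ X) (hf : IsClosedImmersion f)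
      (hc : IsClosed (Set.range f.base))
      (hX : IsLinearScheme k X) (hZ : IsLinearScheme k Z) :
      IsLinearScheme k (Scheme.Opens.toScheme (X := X) ⟨(Set.range f.base)ᶜ, hc.isOpen_compl⟩)
  | ofOpenCompl {Z X : Scheme.{0}} (f : Z ⟶ X) (hf : IsClosedImmersion f)
      (hc : IsClosed (Set.range f.base))
      (hU : IsLinearScheme k
        (Scheme.Opens.toScheme (X := X) ⟨(Set.range f.base)ᶜ, hc.isOpen_compl⟩))
      (hZ : IsLinearScheme k Z) : IsLinearScheme k X

/-- The subalgebra of elements fixed by every `k`-algebra automorphism in `S`. -/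
def fixedSubalgebra (k : Type) {A : Type} [CommSemiring k] [CommSemiring A] [Algebra k A]
    (S : Set (A ≃ₐ[k] A)) : Subalgebra k A where
  carrier := {x | ∀ σ ∈ S, σ x = x}
  mul_mem' := fun ha hb σ hσ => by rw [map_mul, ha σ hσ, hb σ hσ]
  one_mem' := fun σ _ => map_one σ
  add_mem' := fun ha hb σ hσ => by rw [map_add, ha σ hσ, hb σ hσ]
  zero_mem' := fun σ _ => map_zero σ
  algebraMap_mem' := fun r σ _ => σ.commutes r

/-- The Laurent polynomial ring `k[x₁^{±1}, …, x_d^{±1}]` in `d` variables over `k`,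
realized as the group algebra of `ℤ^d`; it is isomorphic to the localization of the
polynomial ring `k[x₁, …, x_d]` at `x₁ ⋯ x_d`. -/
abbrev LaurentRing (k : Type) [CommRing k] (d : ℕ) : Type :=
  AddMonoidAlgebra k (Fin d →₀ ℤ)

/-- The Laurent monomial with exponent vector `e`. -/
def lMono {k : Type} [CommRing k] {d : ℕ} (e : Fin d →₀ ℤ) : LaurentRing k d :=
  AddMonoidAlgebra.single e 1

/-- The `i`-th variable `x_i` of the Laurent polynomial ring. -/
def lX {k : Type} [CommRing k] {d : ℕ} (i : Fin d) : LaurentRing k d :=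
  lMono (Finsupp.single i 1)

/-! Grade `k[ℤ^d]` by the weight `e ↦ ∑ aᵢ eᵢ mod p^s`. The automorphism `σ` acts on the
homogeneous piece of degree `i` as multiplication by `ζ^i`, so, `ζ` being primitive, the
invariants are exactly the degree-zero part. Since `x₁` is a homogeneous unit of degree `1`,
multiplication by `x₁^j` identifies the degree-zero part with the piece of degree `j`, and the
ring is the direct sum of these pieces; hence `1, x₁, …, x₁^(p^s - 1)` is a basis over the
invariants. -/

theorem mem_fixedSubalgebra_closure_singleton_iff {k A : Type} [CommSemiring k] [CommSemiring A]
    [Algebra k A] {σ : A ≃ₐ[k] A} {x : A} :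
    x ∈ fixedSubalgebra k (Subgroup.closure {σ}).carrier ↔ σ x = x :=
  ⟨fun h => h σ (Subgroup.subset_closure rfl), fun h _ hτ =>
    (Subgroup.closure_le (MulAction.stabilizer _ x)).2 (Set.singleton_subset_iff.2 h) hτ⟩

namespace GradedAlgebra

variable {ι R A : Type*} [AddCommGroup ι] [DecidableEq ι] [CommSemiring R] [Ring A]
  [Algebra R A] (𝒜 : ι → Submodule R A) [GradedAlgebra 𝒜]

theorem linearIndependent_units (u : ι → Aˣ) (hu : ∀ i, (u i : A) ∈ 𝒜 i) :
    LinearIndependent (SetLike.GradeZero.subalgebra 𝒜) fun i => (u i : A) := by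
  rw [linearIndependent_iff'ₛ]
  intro s f g hfg j hj
  have component : ∀ c : ι → SetLike.GradeZero.subalgebra 𝒜,
      (DirectSum.decompose 𝒜 (∑ i ∈ s, c i • (u i : A)) j : A) = c j * u j := by
    intro c
    have hmem : ∀ i, c i • (u i : A) ∈ 𝒜 i := fun i => by
      simpa [Subalgebra.smul_def] using SetLike.mul_mem_graded (c i).2 (hu i)
    rw [DirectSum.decompose_sum, DFinsupp.finsetSum_apply, Submodule.coe_sum,
      Finset.sum_eq_single_of_mem j hj fun i _ hij => DirectSum.decompose_of_mem_ne 𝒜 (hmem i) hij]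
    exact DirectSum.decompose_of_mem_same 𝒜 (hmem j)
  have hcomponent := congrArg (fun x => (DirectSum.decompose 𝒜 x j : A)) hfg
  simp only [component] at hcomponent
  exact Subtype.ext ((u j).mul_left_inj.1 hcomponent)

theorem span_units_eq_top (u : ι → Aˣ) (hu : ∀ i, (↑(u i)⁻¹ : A) ∈ 𝒜 (-i)) :
    Submodule.span (SetLike.GradeZero.subalgebra 𝒜) (Set.range fun i => (u i : A)) = ⊤ := by
  classical
  refine Submodule.eq_top_iff'.2 fun x => ?_
  rw [← DirectSum.sum_support_decompose 𝒜 x]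
  refine Submodule.sum_mem _ fun i _ => ?_
  set c : A := (DirectSum.decompose 𝒜 x i : A)
  have hc : c * ↑(u i)⁻¹ ∈ 𝒜 0 := by
    simpa using SetLike.mul_mem_graded (DirectSum.decompose 𝒜 x i).2 (hu i)
  have hc_smul : c = (⟨_, hc⟩ : SetLike.GradeZero.subalgebra 𝒜) • (u i : A) := by
    simp [Subalgebra.smul_def]
  rw [hc_smul]
  exact Submodule.smul_mem _ _ (Submodule.subset_span ⟨i, rfl⟩)

def basisOfUnits (u : ι → Aˣ) (hu : ∀ i, (u i : A) ∈ 𝒜 i)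
    (hu' : ∀ i, (↑(u i)⁻¹ : A) ∈ 𝒜 (-i)) : Module.Basis ι (SetLike.GradeZero.subalgebra 𝒜) A :=
  .mk (linearIndependent_units 𝒜 u hu) (span_units_eq_top 𝒜 u hu').ge

theorem exists_basis_pow {n : ℕ} [NeZero n] (𝒜 : ZMod n → Submodule R A) [GradedAlgebra 𝒜]
    (t : Aˣ) (ht : (t : A) ∈ 𝒜 1) (ht' : (↑t⁻¹ : A) ∈ 𝒜 (-1)) :
    ∃ b : Module.Basis (Fin n) (SetLike.GradeZero.subalgebra 𝒜) A,
      ∀ j, b j = (t : A) ^ (j : ℕ) := by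
  have hpow : ∀ i : ZMod n, ((t ^ i.val : Aˣ) : A) ∈ 𝒜 i := fun i => by
    simpa using SetLike.pow_mem_graded i.val ht
  have hpow' : ∀ i : ZMod n, (↑(t ^ i.val)⁻¹ : A) ∈ 𝒜 (-i) := fun i => by
    simpa using SetLike.pow_mem_graded i.val ht'
  have hval : ∀ j : Fin n, (ZMod.finEquiv n j).val = j := by
    obtain _ | n := n
    · exact absurd rfl (NeZero.ne 0)
    · exact fun _ => rfl
  refine ⟨(basisOfUnits 𝒜 _ hpow hpow').reindex (ZMod.finEquiv n).toEquiv.symm, fun j => ?_⟩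
  simp [basisOfUnits, hval]

end GradedAlgebra

namespace AddMonoidAlgebra

variable {k G : Type*} [AddMonoid G]

theorem coeff_map_eq_mul_of_map_single [CommSemiring k] (ψ : AddChar G k) (σ : k[G] →ₗ[k] k[G])
    (hσ : ∀ g, σ (single g 1) = ψ g • single g 1) (x : k[G]) (g : G) :
    (σ x).coeff g = ψ g * x.coeff g := by
  induction x using induction_linear with
  | zero => simp
  | add x y hx hy => simp [coeff_add, hx, hy, mul_add]
  | single h c =>
    rw [← mul_one c, ← smul_single', map_smul, hσ, smul_smul]
    obtain rfl | hg := eq_or_ne h g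
    · simp [coeff_single, mul_comm]
    · simp [coeff_single, hg]

theorem map_eq_self_iff_mem_gradeBy_zero [CommRing k] [IsDomain k] {ι : Type*} [Zero ι]
    (f : G → ι) (ψ : AddChar G k) (hψ : ∀ g, ψ g = 1 ↔ f g = 0) (σ : k[G] →ₗ[k] k[G])
    (hσ : ∀ g, σ (single g 1) = ψ g • single g 1) (x : k[G]) :
    σ x = x ↔ x ∈ gradeBy k f 0 := by
  simp only [coeff_inj.symm, Finsupp.ext_iff, coeff_map_eq_mul_of_map_single ψ σ hσ,
    mem_gradeBy_iff, Set.subset_def, Finset.mem_coe, Finsupp.mem_support_iff,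
    Set.mem_preimage, Set.mem_singleton_iff, ← hψ]
  refine forall_congr' fun g => ?_
  by_cases hx : x.coeff g = 0 <;> simp [hx, mul_eq_right₀]

end AddMonoidAlgebra

theorem map_single_one_of_map_lX {k : Type} [CommRing k] {d : ℕ} (ψ : AddChar (Fin d →₀ ℤ) k)
    (σ : LaurentRing k d →ₐ[k] LaurentRing k d)
    (hσ : ∀ i, σ (lX i) = ψ (Finsupp.single i 1) • lX i) (e : Fin d →₀ ℤ) :
    σ (AddMonoidAlgebra.single e 1) = ψ e • AddMonoidAlgebra.single e 1 := by
  have : σ.toMonoidHom.comp (AddMonoidAlgebra.of k _) =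
      (algebraMap k (LaurentRing k d) : k →* LaurentRing k d).comp ψ.toMonoidHom *
        AddMonoidAlgebra.of k _ := by
    ext i : 1
    refine MonoidHom.ext_mint ?_
    simpa [lX, lMono, AddMonoidAlgebra.smul_single'] using hσ i
  simpa [AddMonoidAlgebra.smul_single'] using DFunLike.congr_fun this (Multiplicative.ofAdd e)

def diagonalWeight (n : ℕ) {d : ℕ} (a : Fin d → ℤ) : (Fin d →₀ ℤ) →+ ZMod n :=
  (Finsupp.linearCombination ℤ fun i => (a i : ZMod n)).toAddMonoidHom

@[simp]
theorem diagonalWeight_single (n : ℕ) {d : ℕ} (a : Fin d → ℤ) (i : Fin d) :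
    diagonalWeight n a (Finsupp.single i 1) = a i := by
  simp [diagonalWeight]

theorem fixedSubalgebra_eq_gradeZero {k : Type} [Field k] {n d : ℕ} [NeZero n] {ζ : k}
    (hζ : IsPrimitiveRoot ζ n) (a : Fin d → ℤ) (σ : LaurentRing k d ≃ₐ[k] LaurentRing k d)
    (hσ : ∀ i : Fin d, σ (lX i) = ζ ^ (a i) • lX i) :
    fixedSubalgebra k (Subgroup.closure {σ}).carrier =
      SetLike.GradeZero.subalgebra (AddMonoidAlgebra.gradeBy k (diagonalWeight n a)) := by
  -- `ψ e = ζ ^ (weight of e)` is the eigenvalue of `σ` on the monomial with exponent `e`.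
  let ψ := (AddChar.zmodChar n hζ.pow_eq_one).compAddMonoidHom (diagonalWeight n a)
  have hψ : ∀ e, ψ e = 1 ↔ diagonalWeight n a e = 0 := fun e =>
    (AddChar.zmodChar_primitive_of_primitive_root n hζ).zmod_char_eq_one_iff n _
  have hψσ : ∀ i, σ (lX i) = ψ (Finsupp.single i 1) • lX i := fun i => by
    rw [hσ, AddChar.compAddMonoidHom_apply, diagonalWeight_single, ← zsmul_one,
      AddChar.map_zsmul_eq_zpow, ← Nat.cast_one, AddChar.zmodChar_apply', pow_one]
  ext x
  rw [mem_fixedSubalgebra_closure_singleton_iff]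
  exact AddMonoidAlgebra.map_eq_self_iff_mem_gradeBy_zero _ ψ hψ σ.toLinearMap
    (map_single_one_of_map_lX ψ σ hψσ) x

theorem statement_2_general (p s : ℕ) (hp : p.Prime)
    (k : Type) [Field k]
    (ζ : k) (hζ : IsPrimitiveRoot ζ (p ^ s))
    (d : ℕ) (hd : 0 < d) (a : Fin d → ℤ) (ha : a ⟨0, hd⟩ = 1)
    (σ : LaurentRing k d ≃ₐ[k] LaurentRing k d)
    (hσ : ∀ i : Fin d, σ (lX i) = ζ ^ (a i) • lX i) :
    ∃ b : Module.Basis (Fin (p ^ s))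
        ↥(fixedSubalgebra k
          (Subgroup.closure {σ} : Subgroup (LaurentRing k d ≃ₐ[k] LaurentRing k d)).carrier)
        (LaurentRing k d),
      ∀ j : Fin (p ^ s), b j = lX ⟨0, hd⟩ ^ (j : ℕ) := by
  have : NeZero (p ^ s) := ⟨pow_ne_zero s hp.ne_zero⟩
  let x₁ := (AddMonoidAlgebra.of k (Fin d →₀ ℤ)).toHomUnits (.ofAdd (Finsupp.single ⟨0, hd⟩ 1))
  -- `x₁` and `x₁⁻¹` are, definitionally, the monomials with exponents `±e₁`.
  have hx₁ : AddMonoidAlgebra.single (Finsupp.single ⟨0, hd⟩ 1) (1 : k) ∈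
      AddMonoidAlgebra.gradeBy k (diagonalWeight (p ^ s) a) 1 := by
    simpa [ha] using AddMonoidAlgebra.single_mem_gradeBy (diagonalWeight (p ^ s) a)
      (Finsupp.single ⟨0, hd⟩ 1) (1 : k)
  have hx₁_inv : AddMonoidAlgebra.single (-Finsupp.single ⟨0, hd⟩ 1) (1 : k) ∈
      AddMonoidAlgebra.gradeBy k (diagonalWeight (p ^ s) a) (-1) := by
    simpa [ha] using AddMonoidAlgebra.single_mem_gradeBy (diagonalWeight (p ^ s) a)
      (-Finsupp.single ⟨0, hd⟩ 1) (1 : k)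
  obtain ⟨b, hb⟩ := GradedAlgebra.exists_basis_pow _ x₁ hx₁ hx₁_inv
  refine ⟨b.mapCoeffs (Subalgebra.equivOfEq _ _ (fixedSubalgebra_eq_gradeZero hζ a σ hσ).symm)
    fun _ _ => ?_, fun j => ?_⟩
  · rfl
  · exact (b.mapCoeffs_apply _ _ j).trans (hb j)

/-- the Laurent polynomial ring is a free module of rank `p^s` over the
invariant subalgebra of the diagonal automorphism `σ(x_i) = ζ^{a_i} x_i`, with basis
`1, x_1, x_1^2, …, x_1^{p^s - 1}`. -/
theorem statement_2 (p s : ℕ) (hp : p.Prime) (hs : 1 ≤ s)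
    (k : Type) [Field k] (hchar : ringChar k ≠ p)
    (ζ : k) (hζ : IsPrimitiveRoot ζ (p ^ s))
    (d : ℕ) (hd : 0 < d) (a : Fin d → ℤ) (ha : a ⟨0, hd⟩ = 1)
    (σ : LaurentRing k d ≃ₐ[k] LaurentRing k d)
    (hσ : ∀ i : Fin d, σ (lX i) = ζ ^ (a i) • lX i) :
    ∃ b : Module.Basis (Fin (p ^ s))
        ↥(fixedSubalgebra k
          (Subgroup.closure {σ} : Subgroup (LaurentRing k d ≃ₐ[k] LaurentRing k d)).carrier)
        (LaurentRing k d),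
      ∀ j : Fin (p ^ s), b j = lX ⟨0, hd⟩ ^ (j : ℕ) :=
  statement_2_general p s hp k ζ hζ d hd a ha σ hσ
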